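/- arXiv:1303.1346 — 6 statements merged into one kernel-verified Lean document; each statement's English description precedes it below -/
import Mathlib

section
/- For every positive integer n there exists an automorphism φ_n of the free group F_∞ = FreeGroup ℕ on countably many generators whose Reidemeister number is exactly n, i.e., the quotient of F_∞ by the Reidemeister equivalence relation of φ_n has exactly n elements. -/
/-- Two elements `x y : G` are Reidemeister equivalent with respect to an
endomorphism `φ` of `G` if `x = z * y * (φ z)⁻¹` for some `z : G`. -/
def ReidemeisterRel {G : Type*} [Group G] (φ : G →* G) (x y : G) : Prop :=
  ∃ z : G, x = z * y * (φ z)⁻¹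

/-- The set (type) of Reidemeister classes of an endomorphism `φ` of a group `G`. -/
def ReidemeisterClasses {G : Type*} [Group G] (φ : G →* G) : Type _ :=
  Quot (ReidemeisterRel φ)

/-- A group `G` has property `R_∞` if every automorphism of `G` has infinitely
many Reidemeister classes. -/
def PropertyRInfinity (G : Type*) [Group G] : Prop :=
  ∀ φ : G ≃* G, Infinite (ReidemeisterClasses φ.toMonoidHom)

/-! A homomorphism `h` to an abelian group with `h ∘ φ = h` is constant on Reidemeister classes.
On `F_∞ = ⟨x₀, x₁, …⟩`, enumerate all words as `v₀, v₁, …` with `vᵢ`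
involving only `x_j`, `j < i`, let `h` be the exponent sum of `x₀` modulo `n`, and set
`φ(xᵢ) = x₀^{-kᵢ} xᵢ vᵢ` with `kᵢ ≡ h(vᵢ)`. This map is unitriangular, hence an automorphism,
it preserves `h`, and `xᵢ⁻¹ · x₀^{kᵢ} · φ(xᵢ⁻¹)⁻¹ = vᵢ`: every word is equivalent to the power of
`x₀` with the same value of `h`, so the Reidemeister classes correspond to `ZMod n`. -/

section Reidemeister

variable {G H : Type*} [Group G] [CommGroup H] {φ : G →* G} {h : G →* H}

theorem ReidemeisterRel.map_eq (hφ : ∀ g, h (φ g) = h g) {x y : G}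
    (hxy : ReidemeisterRel φ x y) : h x = h y := by
  obtain ⟨z, rfl⟩ := hxy
  rw [map_mul, map_mul, map_inv, hφ, mul_inv_cancel_comm]

def reidemeisterClassesEquivOfInvariant (hφ : ∀ g, h (φ g) = h g) (s : H → G)
    (hs : Function.RightInverse s h) (hrel : ∀ g, ReidemeisterRel φ g (s (h g))) :
    ReidemeisterClasses φ ≃ H where
  toFun := Quot.lift h fun _ _ => ReidemeisterRel.map_eq hφ
  invFun c := Quot.mk _ (s c)
  left_inv := Quot.ind fun g => (Quot.sound (hrel g)).symm
  right_inv := hs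

end Reidemeister

namespace FreeGroup

def subgroupBelow (i : ℕ) : Subgroup (FreeGroup ℕ) :=
  Subgroup.closure (of '' Set.Iio i)

theorem subgroupBelow_mono : Monotone subgroupBelow :=
  fun _ _ hij => Subgroup.closure_mono (Set.image_mono (Set.Iio_subset_Iio hij))

theorem subgroupBelow_zero : subgroupBelow 0 = ⊥ := by
  simp [subgroupBelow]

theorem of_mem_subgroupBelow {i j : ℕ} (hij : j < i) : of j ∈ subgroupBelow i :=
  Subgroup.subset_closure ⟨j, hij, rfl⟩

theorem exists_mem_subgroupBelow (w : FreeGroup ℕ) : ∃ m, w ∈ subgroupBelow m := by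
  have hsup : ⨆ m, subgroupBelow m = ⊤ := by
    simp only [subgroupBelow]
    rw [← Subgroup.closure_iUnion, ← Set.image_iUnion, Set.iUnion_Iio,
      Set.image_univ, closure_range_of]
  exact (Subgroup.mem_iSup_of_directed subgroupBelow_mono.directed_le).1
    (hsup ▸ Subgroup.mem_top w)

theorem eqOn_subgroupBelow {M : Type*} [Group M] {f g : FreeGroup ℕ →* M} {i : ℕ}
    (hfg : ∀ j < i, f (of j) = g (of j)) {w : FreeGroup ℕ} (hw : w ∈ subgroupBelow i) :
    f w = g w :=
  (Subgroup.closure_le (f.eqLocus g)).2 (by rintro _ ⟨j, hj, rfl⟩; exact hfg j hj) hw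

theorem exists_surjective_mem_subgroupBelow :
    ∃ v : ℕ → FreeGroup ℕ, Function.Surjective v ∧ ∀ i, v i ∈ subgroupBelow i := by
  classical
  obtain ⟨e, he⟩ := exists_surjective_nat (FreeGroup ℕ)
  refine ⟨fun i => if e i.unpair.1 ∈ subgroupBelow i then e i.unpair.1 else 1, ?_, ?_⟩
  · intro w
    obtain ⟨j, rfl⟩ := he w
    obtain ⟨m, hm⟩ := exists_mem_subgroupBelow (e j)
    refine ⟨Nat.pair j m, ?_⟩
    beta_reduce
    rw [Nat.unpair_pair, if_pos (subgroupBelow_mono (Nat.right_le_pair j m) hm)]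
  · intro i
    beta_reduce
    split_ifs with h
    exacts [h, one_mem _]

end FreeGroup

namespace FreeGroup

section Triangular

variable (a b : ℕ → FreeGroup ℕ)

def triangularHom : FreeGroup ℕ →* FreeGroup ℕ :=
  lift fun i => a i * of i * b i

theorem triangularHom_of (i : ℕ) : triangularHom a b (of i) = a i * of i * b i :=
  lift_apply_of

theorem triangularHom_surjective (ha : ∀ i, a i ∈ subgroupBelow i)
    (hb : ∀ i, b i ∈ subgroupBelow i) : Function.Surjective (triangularHom a b) := by
  have hof : ∀ i, of i ∈ (triangularHom a b).range := by
    intro i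
    induction i using Nat.strong_induction_on with
    | _ i ih =>
      have hbelow : subgroupBelow i ≤ (triangularHom a b).range :=
        (Subgroup.closure_le _).2 (by rintro _ ⟨j, hj, rfl⟩; exact ih j hj)
      have hsolve : of i = (a i)⁻¹ * triangularHom a b (of i) * (b i)⁻¹ := by
        rw [triangularHom_of]; group
      rw [hsolve]
      exact mul_mem (mul_mem (inv_mem (hbelow (ha i))) ⟨of i, rfl⟩) (inv_mem (hbelow (hb i)))
  rw [← MonoidHom.range_eq_top, eq_top_iff, ← closure_range_of, Subgroup.closure_le]
  rintro _ ⟨i, rfl⟩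
  exact hof i

/-- Images of the generators under the inverse of `triangularHom a b`, by strong recursion;
the truncation to indices `j < i` is harmless because `a i` and `b i` only involve those. -/
def triangularInvOf (i : ℕ) : FreeGroup ℕ :=
  let ψ : FreeGroup ℕ →* FreeGroup ℕ := lift fun j => if _ : j < i then triangularInvOf j else 1
  (ψ (a i))⁻¹ * of i * (ψ (b i))⁻¹
termination_by i

theorem triangularInvOf_eq (ha : ∀ i, a i ∈ subgroupBelow i) (hb : ∀ i, b i ∈ subgroupBelow i)
    (i : ℕ) : triangularInvOf a b i =
      (lift (triangularInvOf a b) (a i))⁻¹ * of i * (lift (triangularInvOf a b) (b i))⁻¹ := by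
  have htrunc : ∀ j < i, lift (fun j => if _ : j < i then triangularInvOf a b j else 1) (of j) =
      lift (triangularInvOf a b) (of j) := by
    intro j hj
    rw [lift_apply_of, lift_apply_of, dif_pos hj]
  rw [triangularInvOf, eqOn_subgroupBelow htrunc (ha i), eqOn_subgroupBelow htrunc (hb i)]

theorem triangularHom_injective (ha : ∀ i, a i ∈ subgroupBelow i)
    (hb : ∀ i, b i ∈ subgroupBelow i) : Function.Injective (triangularHom a b) := by
  have hinv : (lift (triangularInvOf a b)).comp (triangularHom a b) = MonoidHom.id _ := by
    refine ext_hom _ _ fun i => ?_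
    rw [MonoidHom.comp_apply, triangularHom_of, _root_.map_mul, _root_.map_mul, lift_apply_of,
      triangularInvOf_eq a b ha hb, MonoidHom.id_apply]
    group
  exact Function.LeftInverse.injective (DFunLike.congr_fun hinv)

end Triangular

end FreeGroup

section Construction

open FreeGroup Multiplicative

variable (n : ℕ)

def x0ExpMod : FreeGroup ℕ →* Multiplicative (ZMod n) :=
  lift fun i => if i = 0 then ofAdd 1 else 1

def x0Pow (c : Multiplicative (ZMod n)) : FreeGroup ℕ :=
  of 0 ^ (toAdd c).val

theorem x0ExpMod_x0Pow [NeZero n] : Function.RightInverse (x0Pow n) (x0ExpMod n) := by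
  intro c
  rw [x0Pow, map_pow, x0ExpMod, lift_apply_of, if_pos rfl, ← ofAdd_nsmul, nsmul_one,
    ZMod.natCast_zmod_val, ofAdd_toAdd]

theorem x0Pow_inv_mem_subgroupBelow {v : ℕ → FreeGroup ℕ} (hv : ∀ i, v i ∈ subgroupBelow i)
    (i : ℕ) : (x0Pow n (x0ExpMod n (v i)))⁻¹ ∈ subgroupBelow i := by
  rcases Nat.eq_zero_or_pos i with rfl | hi
  · have hv0 : v 0 = 1 := by simpa [subgroupBelow_zero] using hv 0
    simp [hv0, x0Pow]
  · exact inv_mem (pow_mem (of_mem_subgroupBelow hi) _)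

def twistHom (v : ℕ → FreeGroup ℕ) : FreeGroup ℕ →* FreeGroup ℕ :=
  triangularHom (fun i => (x0Pow n (x0ExpMod n (v i)))⁻¹) v

theorem x0ExpMod_twistHom [NeZero n] (v : ℕ → FreeGroup ℕ) (g : FreeGroup ℕ) :
    x0ExpMod n (twistHom n v g) = x0ExpMod n g := by
  have hcomp : (x0ExpMod n).comp (twistHom n v) = x0ExpMod n := by
    refine ext_hom _ _ fun i => ?_
    rw [MonoidHom.comp_apply, twistHom, triangularHom_of, _root_.map_mul, _root_.map_mul,
      _root_.map_inv, x0ExpMod_x0Pow, mul_comm, ← mul_assoc, mul_inv_cancel, one_mul]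
  exact DFunLike.congr_fun hcomp g

theorem reidemeisterRel_twistHom_x0Pow {v : ℕ → FreeGroup ℕ} (hv : Function.Surjective v)
    (w : FreeGroup ℕ) : ReidemeisterRel (twistHom n v) w (x0Pow n (x0ExpMod n w)) := by
  obtain ⟨i, rfl⟩ := hv w
  refine ⟨(of i)⁻¹, ?_⟩
  rw [_root_.map_inv, inv_inv, twistHom, triangularHom_of]
  group

end Construction

/-- For every positive integer `n` there is an automorphism `φₙ` of the free group
`F_∞ = FreeGroup ℕ` of countably infinite rank whose Reidemeister number is exactly `n`. -/
theorem exists_automorphism_freeGroupNat_reidemeisterNumber_eq (n : ℕ) (hn : 0 < n) :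
    ∃ φ : FreeGroup ℕ ≃* FreeGroup ℕ,
      Nat.card (ReidemeisterClasses φ.toMonoidHom) = n := by
  have : NeZero n := ⟨hn.ne'⟩
  obtain ⟨v, hv_surj, hv_mem⟩ := FreeGroup.exists_surjective_mem_subgroupBelow
  have ha := x0Pow_inv_mem_subgroupBelow n hv_mem
  refine ⟨MulEquiv.ofBijective (twistHom n v)
    ⟨FreeGroup.triangularHom_injective _ _ ha hv_mem,
      FreeGroup.triangularHom_surjective _ _ ha hv_mem⟩, ?_⟩
  calc Nat.card (ReidemeisterClasses (twistHom n v))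
      = Nat.card (Multiplicative (ZMod n)) :=
        Nat.card_congr (reidemeisterClassesEquivOfInvariant (x0ExpMod_twistHom n v) (x0Pow n)
          (x0ExpMod_x0Pow n) (reidemeisterRel_twistHom_x0Pow n hv_surj))
    _ = n := by rw [Nat.card_congr Multiplicative.toAdd, Nat.card_zmod]
end

section
/- Let F = FreeGroup ℕ with generators x_0, x_1, x_2, ..., let φ : F →* F be the homomorphism (via FreeGroup.lift) determined by φ(x_0) = x_0 and φ(x_{i+1}) = x_i * x_{i+1}, and let c ≥ 1. Then φ is bijective, φ induces an endomorphism φ_c on the free nilpotent group N_{∞,c} = F ⧸ γ_{c+1}(F) of class c and countable rank, φ_c is bijective, and φ_c has exactly one Reidemeister class: every g ∈ N_{∞,c} can be written g = z * φ_c(z)⁻¹ for some z ∈ N_{∞,c}. In particular N_{∞,c} does not have property R_∞. -/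
/-- The endomorphism `φ` of `F_∞ = FreeGroup ℕ` determined by `φ(x_0) = x_0` and
`φ(x_{i+1}) = x_i * x_{i+1}`. -/
noncomputable def phiFree : FreeGroup ℕ →* FreeGroup ℕ :=
  FreeGroup.lift fun i =>
    match i with
    | 0 => FreeGroup.of 0
    | Nat.succ j => FreeGroup.of j * FreeGroup.of (j + 1)

/-- `φ` maps `γ_{c+1}(F_∞) = lowerCentralSeries F_∞ c` into itself. -/
theorem phiFree_lcs_le (c : ℕ) :
    Subgroup.lowerCentralSeries (⊤ : Subgroup (FreeGroup ℕ)) c ≤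
      (Subgroup.lowerCentralSeries (⊤ : Subgroup (FreeGroup ℕ)) c).comap phiFree :=
  Subgroup.map_le_iff_le_comap.mp (Subgroup.lowerCentralSeries.map phiFree c)

/-- The endomorphism `φ_c` induced by `φ` on the free nilpotent group
`N_{∞,c} = F_∞ / γ_{c+1}(F_∞)` of class `c` and countable rank. -/
noncomputable def phiFreeNilpotent (c : ℕ) :
    FreeGroup ℕ ⧸ Subgroup.lowerCentralSeries (⊤ : Subgroup (FreeGroup ℕ)) c →*
      FreeGroup ℕ ⧸ Subgroup.lowerCentralSeries (⊤ : Subgroup (FreeGroup ℕ)) c :=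
  QuotientGroup.map _ _ phiFree (phiFree_lcs_le c)


/-!
Write `langMap φ z = z * (φ z)⁻¹`, so that the Reidemeister class of `1` is the image of
`langMap φ`. It suffices to show that `langMap φ` is onto modulo every term `γ c` of the lower
central series (Mathlib's indexing, `γ 0 = G`). Modulo `γ (k + 1)`, `langMap φ` restricted to
`γ k` is a homomorphism, so lifting along the series it is enough that its image on `γ k`
covers `γ k` modulo `γ (k + 1)`, for every `k`.

For `φ(x₀) = x₀`, `φ(xₙ₊₁) = xₙ xₙ₊₁` one has `langMap φ x₀ = 1` and `langMap φ xₙ₊₁ = xₙ⁻¹`,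
which settles `k = 0`. At level `k + 1`, writing a generator `⁅p, q⁆` of `γ (k + 1)` with
`p ≡ langMap φ v`, bilinearity of commutators modulo `γ (k + 2)` gives
`⁅p, q⁆ ≡ langMap φ ⁅v, q⁆ * ⁅φ v, langMap φ q⁆⁻¹`.
So `⁅γ k, q⁆` is covered as soon as `⁅γ k, langMap φ q⁆` is, and induction on `n` covers
`⁅γ k, xₙ⁆` for every generator `xₙ`.
-/

open scoped commutatorElement

section LowerCentralSeries

variable {G : Type*} [Group G]

local notation "γ" k:max => Subgroup.lowerCentralSeries (⊤ : Subgroup G) k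

theorem commutatorElement_mem_lowerCentralSeries_succ {k : ℕ} {p : G} (hp : p ∈ γ k) (q : G) :
    ⁅p, q⁆ ∈ γ (k + 1) :=
  Subgroup.commutator_mem_commutator hp (Subgroup.mem_top q)

theorem map_mem_lowerCentralSeries {H : Type*} [Group H] (f : G →* H) {k : ℕ} {x : G}
    (hx : x ∈ γ k) : f x ∈ Subgroup.lowerCentralSeries (⊤ : Subgroup H) k := by
  have hmap := Subgroup.mem_map_of_mem f hx
  rw [Subgroup.map_lowerCentralSeries] at hmap
  exact Subgroup.lowerCentralSeries_mono k le_top hmap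

theorem commute_mk_of_mem_lowerCentralSeries {k : ℕ} {c : G} (hc : c ∈ γ k)
    (g : G ⧸ γ (k + 1)) : Commute (c : G ⧸ γ (k + 1)) g := by
  induction g using QuotientGroup.induction_on with
  | H a =>
    refine (QuotientGroup.eq.mpr ?_).symm
    have h : (a * c)⁻¹ * (c * a) = ⁅c⁻¹, a⁻¹⁆ := by simp only [commutatorElement_def]; group
    rw [h]
    exact commutatorElement_mem_lowerCentralSeries_succ (inv_mem hc) a⁻¹

theorem mk_commutatorElement_mul_left {k : ℕ} {p' : G} (hp' : p' ∈ γ k) (p q : G) :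
    ((⁅p * p', q⁆ : G) : G ⧸ γ (k + 1 + 1)) = (⁅p, q⁆ : G) * (⁅p', q⁆ : G) := by
  have h : ⁅p * p', q⁆ = p * ⁅p', q⁆ * p⁻¹ * ⁅p, q⁆ := by
    simp only [commutatorElement_def]; group
  have hc := commute_mk_of_mem_lowerCentralSeries
    (commutatorElement_mem_lowerCentralSeries_succ hp' q)
  simp only [h, QuotientGroup.mk_mul, QuotientGroup.mk_inv]
  rw [(hc _).symm.mul_inv_cancel, (hc _).eq]

theorem mk_commutatorElement_mul_right {k : ℕ} {p : G} (hp : p ∈ γ k) (q q' : G) :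
    ((⁅p, q * q'⁆ : G) : G ⧸ γ (k + 1 + 1)) = (⁅p, q⁆ : G) * (⁅p, q'⁆ : G) := by
  have h : ⁅p, q * q'⁆ = ⁅p, q⁆ * (q * ⁅p, q'⁆ * q⁻¹) := by
    simp only [commutatorElement_def]; group
  have hc := commute_mk_of_mem_lowerCentralSeries
    (commutatorElement_mem_lowerCentralSeries_succ hp q')
  simp only [h, QuotientGroup.mk_mul, QuotientGroup.mk_inv]
  rw [(hc _).symm.mul_inv_cancel]

theorem mk_commutatorElement_eq_of_mk_eq {k : ℕ} {p p' : G}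
    (h : (p : G ⧸ γ (k + 1)) = p') (q : G) :
    ((⁅p, q⁆ : G) : G ⧸ γ (k + 1 + 1)) = (⁅p', q⁆ : G) := by
  have hm : p⁻¹ * p' ∈ γ (k + 1) := QuotientGroup.eq.mp h
  have hm' : ((⁅p⁻¹ * p', q⁆ : G) : G ⧸ γ (k + 1 + 1)) = 1 :=
    (QuotientGroup.eq_one_iff _).mpr (commutatorElement_mem_lowerCentralSeries_succ hm q)
  rw [← mul_inv_cancel_left p p', mk_commutatorElement_mul_left
    (Subgroup.lowerCentralSeries_antitone _ k.le_succ hm), hm', mul_one]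

def commutatorLeftHom {k : ℕ} (p : γ k) : G →* G ⧸ γ (k + 1 + 1) where
  toFun q := (⁅(p : G), q⁆ : G)
  map_one' := by rw [commutatorElement_one_right, QuotientGroup.mk_one]
  map_mul' := mk_commutatorElement_mul_right p.2

end LowerCentralSeries

section LangMap

variable {G : Type*} [Group G] (φ : G →* G)

local notation "γ" k:max => Subgroup.lowerCentralSeries (⊤ : Subgroup G) k

def langMap (z : G) : G := z * (φ z)⁻¹

theorem langMap_mul (a b : G) : langMap φ (a * b) = a * langMap φ b * a⁻¹ * langMap φ a := by
  simp only [langMap, map_mul]; group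

theorem langMap_mul_self (z : G) : langMap φ z * φ z = z := inv_mul_cancel_right z (φ z)

theorem langMap_mem_lowerCentralSeries {k : ℕ} {w : G} (hw : w ∈ γ k) : langMap φ w ∈ γ k :=
  mul_mem hw (inv_mem (map_mem_lowerCentralSeries φ hw))

theorem mk_langMap_mul {k : ℕ} {b : G} (hb : b ∈ γ k) (a : G) :
    ((langMap φ (a * b) : G) : G ⧸ γ (k + 1)) = (langMap φ a : G) * (langMap φ b : G) := by
  have hc := commute_mk_of_mem_lowerCentralSeries (langMap_mem_lowerCentralSeries φ hb)
  simp only [langMap_mul, QuotientGroup.mk_mul, QuotientGroup.mk_inv]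
  rw [(hc _).symm.mul_inv_cancel, (hc _).eq]

def langMapGraded (k : ℕ) : γ k →* G ⧸ γ (k + 1) where
  toFun w := ((langMap φ w : G) : G ⧸ γ (k + 1))
  map_one' := by
    rw [OneMemClass.coe_one, langMap, map_one, inv_one, mul_one, QuotientGroup.mk_one]
  map_mul' a b := mk_langMap_mul φ b.2 a

def langImage (k : ℕ) : Subgroup G :=
  (langMapGraded φ k).range.comap (QuotientGroup.mk' (γ (k + 1)))

theorem mem_langImage_iff {k : ℕ} {x : G} :
    x ∈ langImage φ k ↔ ∃ w ∈ γ k, ((langMap φ w : G) : G ⧸ γ (k + 1)) = x := by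
  simp only [langImage, Subgroup.mem_comap, MonoidHom.mem_range, Subtype.exists]
  exact ⟨fun ⟨w, hw, h⟩ => ⟨w, hw, h⟩, fun ⟨w, hw, h⟩ => ⟨w, hw, h⟩⟩

theorem langMap_mem_langImage {k : ℕ} {w : G} (hw : w ∈ γ k) : langMap φ w ∈ langImage φ k :=
  (mem_langImage_iff φ).mpr ⟨w, hw, rfl⟩

theorem mem_langImage_of_mk_eq {k : ℕ} {x y : G} (h : (x : G ⧸ γ (k + 1)) = y)
    (hy : y ∈ langImage φ k) : x ∈ langImage φ k := by
  rw [langImage, Subgroup.mem_comap, QuotientGroup.mk'_apply, h]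
  exact hy

theorem mk_langMap_commutatorElement {k : ℕ} {v : G} (hv : v ∈ γ k) (q : G) :
    ((langMap φ ⁅v, q⁆ : G) : G ⧸ γ (k + 1 + 1))
      = (⁅langMap φ v, q⁆ : G) * (⁅φ v, langMap φ q⁆ : G) := by
  have hφv : φ v ∈ γ k := map_mem_lowerCentralSeries φ hv
  have hvq : ((⁅v, q⁆ : G) : G ⧸ γ (k + 1 + 1))
      = (⁅langMap φ v, q⁆ : G) * (⁅φ v, langMap φ q⁆ : G) * (⁅φ v, φ q⁆ : G) := calc
    ((⁅v, q⁆ : G) : G ⧸ γ (k + 1 + 1))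
        = (⁅langMap φ v * φ v, langMap φ q * φ q⁆ : G) := by
      rw [langMap_mul_self, langMap_mul_self]
    _ = _ := by
      rw [mk_commutatorElement_mul_left hφv, mk_commutatorElement_mul_right hφv (langMap φ q),
        mul_assoc, langMap_mul_self]
  rw [langMap, map_commutatorElement, QuotientGroup.mk_mul, QuotientGroup.mk_inv, hvq,
    mul_inv_cancel_right]

def langCommutant (k : ℕ) : Subgroup G :=
  ⨅ p : γ k, (langMapGraded φ (k + 1)).range.comap (commutatorLeftHom p)

theorem mem_langCommutant_iff {k : ℕ} {q : G} :
    q ∈ langCommutant φ k ↔ ∀ p ∈ γ k, ⁅p, q⁆ ∈ langImage φ (k + 1) := by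
  simp only [langCommutant, Subgroup.mem_iInf, Subtype.forall]
  rfl

theorem mem_langCommutant_of_langMap_mem {k : ℕ} (hk : γ k ≤ langImage φ k) {q : G}
    (hq : langMap φ q ∈ langCommutant φ k) : q ∈ langCommutant φ k := by
  rw [mem_langCommutant_iff] at hq ⊢
  intro p hp
  obtain ⟨v, hv, hvp⟩ := (mem_langImage_iff φ).mp (hk hp)
  have hpq : ((⁅p, q⁆ : G) : G ⧸ γ (k + 1 + 1))
      = (langMap φ ⁅v, q⁆ * ⁅φ v, langMap φ q⁆⁻¹ : G) := by
    rw [← mk_commutatorElement_eq_of_mk_eq hvp, QuotientGroup.mk_mul, QuotientGroup.mk_inv,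
      mk_langMap_commutatorElement φ hv, mul_inv_cancel_right]
  exact mem_langImage_of_mk_eq φ hpq <|
    mul_mem (langMap_mem_langImage φ (commutatorElement_mem_lowerCentralSeries_succ hv q))
      (inv_mem (hq _ (map_mem_lowerCentralSeries φ hv)))

theorem lowerCentralSeries_succ_le_langImage {k : ℕ} (h : langCommutant φ k = ⊤) :
    γ (k + 1) ≤ langImage φ (k + 1) :=
  Subgroup.commutator_le.mpr fun p hp q _ =>
    (mem_langCommutant_iff φ).mp (h ▸ Subgroup.mem_top q) p hp

theorem exists_mk_langMap_eq (h : ∀ k, γ k ≤ langImage φ k) (c : ℕ) (g : G) :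
    ∃ z, ((langMap φ z : G) : G ⧸ γ c) = g := by
  induction c with
  | zero => exact ⟨1, QuotientGroup.eq.mpr (Subgroup.mem_top _)⟩
  | succ c ih =>
    obtain ⟨z, hz⟩ := ih
    obtain ⟨w, hw, hwg⟩ := (mem_langImage_iff φ).mp (h c (QuotientGroup.eq.mp hz))
    refine ⟨z * w, ?_⟩
    rw [mk_langMap_mul φ hw, hwg, ← QuotientGroup.mk_mul, mul_inv_cancel_left]

theorem exists_eq_mul_inv_quotientMap (h : ∀ k, γ k ≤ langImage φ k) (c : ℕ)
    (hφ : γ c ≤ (γ c).comap φ) (g : G ⧸ γ c) :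
    ∃ z, g = z * (QuotientGroup.map _ _ φ hφ z)⁻¹ := by
  obtain ⟨g, rfl⟩ := QuotientGroup.mk_surjective g
  obtain ⟨z, hz⟩ := exists_mk_langMap_eq φ h c g
  exact ⟨z, by rw [QuotientGroup.map_mk, ← hz]; rfl⟩

end LangMap

theorem ReidemeisterClasses.subsingleton {G : Type*} [Group G] {φ : G →* G}
    (h : ∀ g, ∃ z, g = z * (φ z)⁻¹) : Subsingleton (ReidemeisterClasses φ) := by
  have hone : ∀ x : ReidemeisterClasses φ, x = Quot.mk _ 1 := by
    refine Quot.ind fun g => Quot.sound ?_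
    obtain ⟨z, hz⟩ := h g
    exact ⟨z, by rw [mul_one, ← hz]⟩
  exact ⟨fun a b => (hone a).trans (hone b).symm⟩

theorem not_propertyRInfinity_of_forall_eq_mul_inv {G : Type*} [Group G] (e : G ≃* G)
    (h : ∀ g, ∃ z, g = z * (e z)⁻¹) : ¬ PropertyRInfinity G := fun hR =>
  have := ReidemeisterClasses.subsingleton (φ := e.toMonoidHom) h
  have := hR e
  not_finite (ReidemeisterClasses e.toMonoidHom)

theorem bijective_quotientMap_of_characteristic {G : Type*} [Group G] (N : Subgroup G)
    [N.Characteristic] (e : G ≃* G) (h : N ≤ N.comap e.toMonoidHom) :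
    Function.Bijective (QuotientGroup.map N N e.toMonoidHom h) :=
  (QuotientGroup.congr N N e (Subgroup.characteristic_iff_map_eq.mp ‹_› e)).bijective

section FreeGroup

local notation "γ" k:max => Subgroup.lowerCentralSeries (⊤ : Subgroup (FreeGroup ℕ)) k

theorem phiFree_of_zero : phiFree (FreeGroup.of 0) = FreeGroup.of 0 :=
  FreeGroup.lift_apply_of

theorem phiFree_of_succ (n : ℕ) :
    phiFree (FreeGroup.of (n + 1)) = FreeGroup.of n * FreeGroup.of (n + 1) :=
  FreeGroup.lift_apply_of

theorem langMap_phiFree_of_zero : langMap phiFree (FreeGroup.of 0) = 1 := by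
  rw [langMap, phiFree_of_zero, mul_inv_cancel]

theorem langMap_phiFree_of_succ (n : ℕ) :
    langMap phiFree (FreeGroup.of (n + 1)) = (FreeGroup.of n)⁻¹ := by
  rw [langMap, phiFree_of_succ]; group

theorem langCommutant_phiFree_eq_top {k : ℕ} (hk : γ k ≤ langImage phiFree k) :
    langCommutant phiFree k = ⊤ := by
  have hof : ∀ n, FreeGroup.of n ∈ langCommutant phiFree k := by
    intro n
    induction n with
    | zero =>
      refine mem_langCommutant_of_langMap_mem phiFree hk ?_
      rw [langMap_phiFree_of_zero]
      exact one_mem _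
    | succ n ih =>
      refine mem_langCommutant_of_langMap_mem phiFree hk ?_
      rw [langMap_phiFree_of_succ]
      exact inv_mem ih
  rw [eq_top_iff, ← FreeGroup.closure_range_of, Subgroup.closure_le]
  rintro _ ⟨n, rfl⟩
  exact hof n

theorem lowerCentralSeries_le_langImage_phiFree (k : ℕ) : γ k ≤ langImage phiFree k := by
  induction k with
  | zero =>
    rw [Subgroup.lowerCentralSeries_zero, ← FreeGroup.closure_range_of, Subgroup.closure_le]
    rintro _ ⟨n, rfl⟩
    have h := inv_mem <|
      langMap_mem_langImage phiFree (k := 0) (Subgroup.mem_top (FreeGroup.of (n + 1)))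
    rwa [langMap_phiFree_of_succ, inv_inv] at h
  | succ k ih =>
    exact lowerCentralSeries_succ_le_langImage phiFree (langCommutant_phiFree_eq_top ih)

def phiFreeInvGen : ℕ → FreeGroup ℕ
  | 0 => FreeGroup.of 0
  | n + 1 => (phiFreeInvGen n)⁻¹ * FreeGroup.of (n + 1)

theorem phiFree_phiFreeInvGen (n : ℕ) : phiFree (phiFreeInvGen n) = FreeGroup.of n := by
  induction n with
  | zero => exact phiFree_of_zero
  | succ n ih =>
    rw [phiFreeInvGen, map_mul, map_inv, ih, phiFree_of_succ, inv_mul_cancel_left]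

noncomputable def phiFreeEquiv : FreeGroup ℕ ≃* FreeGroup ℕ :=
  phiFree.toMulEquiv (FreeGroup.lift phiFreeInvGen)
    (FreeGroup.ext_hom _ _ fun n => by
      cases n with
      | zero => simp [phiFree_of_zero, phiFreeInvGen]
      | succ n => simp [phiFree_of_succ, phiFreeInvGen])
    (FreeGroup.ext_hom _ _ fun n => by simp [phiFree_phiFreeInvGen])

end FreeGroup

theorem freeNilpotentInftyRank_not_propertyRInfinity_general (c : ℕ) :
    Function.Bijective phiFree ∧
    Function.Bijective (phiFreeNilpotent c) ∧
    (∀ g : FreeGroup ℕ ⧸ Subgroup.lowerCentralSeries (⊤ : Subgroup (FreeGroup ℕ)) c,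
      ∃ z, g = z * (phiFreeNilpotent c z)⁻¹) ∧
    ¬ PropertyRInfinity (FreeGroup ℕ ⧸ Subgroup.lowerCentralSeries (⊤ : Subgroup (FreeGroup ℕ)) c) := by
  have hbij : Function.Bijective (phiFreeNilpotent c) :=
    bijective_quotientMap_of_characteristic _ phiFreeEquiv (phiFree_lcs_le c)
  have hsolve := exists_eq_mul_inv_quotientMap phiFree lowerCentralSeries_le_langImage_phiFree c
    (phiFree_lcs_le c)
  exact ⟨phiFreeEquiv.bijective, hbij, hsolve,
    not_propertyRInfinity_of_forall_eq_mul_inv (MulEquiv.ofBijective _ hbij) hsolve⟩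

/-- With `φ : F_∞ →* F_∞` determined by `φ(x_0) = x_0`, `φ(x_{i+1}) = x_i * x_{i+1}` and
`c ≥ 1`: `φ` is bijective, the induced endomorphism `φ_c` of
`N_{∞,c} = F_∞ / γ_{c+1}(F_∞)` is bijective, `φ_c` has exactly one Reidemeister class
(every `g` equals `z * (φ_c z)⁻¹` for some `z`), and consequently `N_{∞,c}` does not have
property `R_∞`. -/
theorem freeNilpotentInftyRank_not_propertyRInfinity (c : ℕ) (hc : 1 ≤ c) :
    Function.Bijective phiFree ∧
    Function.Bijective (phiFreeNilpotent c) ∧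
    (∀ g : FreeGroup ℕ ⧸ Subgroup.lowerCentralSeries (⊤ : Subgroup (FreeGroup ℕ)) c,
      ∃ z, g = z * (phiFreeNilpotent c z)⁻¹) ∧
    ¬ PropertyRInfinity (FreeGroup ℕ ⧸ Subgroup.lowerCentralSeries (⊤ : Subgroup (FreeGroup ℕ)) c) :=
  freeNilpotentInftyRank_not_propertyRInfinity_general c
end

section
/- Let X be an infinite set. Then there exists an automorphism φ of the free group F(X) = FreeGroup X with exactly one Reidemeister class, i.e., every g ∈ FreeGroup X can be written g = z * φ(z)⁻¹ for some z. Hence FreeGroup X does not have property R_∞. -/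
/-!
Take `F` free on a basis `Y` that contains `X` together with a fresh generator `y_w` for every word
`w` in the generators already present, created in countably many stages. The automorphism `φ`
fixing `X` and sending `y_w ↦ w⁻¹ y_w` satisfies `w = y_w (φ y_w)⁻¹`, so it has a single
Reidemeister class; its inverse `y_w ↦ φ⁻¹(w) y_w` is defined by recursion on the stage of `y_w`.
For infinite `X` the basis `Y` has the cardinality of `X`, so `F ≃* FreeGroup X`.
-/

universe u

open FreeGroup Cardinal

section Reidemeister

variable {G H : Type*} [Group G] [Group H]

theorem ReidemeisterClasses.subsingleton_of_forall_eq_mul_inv {φ : G →* G}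
    (hφ : ∀ g, ∃ z, g = z * (φ z)⁻¹) : Subsingleton (ReidemeisterClasses φ) := by
  have h_eq_one (x : G) : Quot.mk (ReidemeisterRel φ) x = Quot.mk _ 1 := by
    obtain ⟨z, hz⟩ := hφ x
    exact Quot.sound ⟨z, by rwa [mul_one]⟩
  constructor
  rintro ⟨x⟩ ⟨y⟩
  exact (h_eq_one x).trans (h_eq_one y).symm

theorem not_propertyRInfinity_of_forall_eq_mul_inv_s8 (φ : G ≃* G)
    (hφ : ∀ g, ∃ z, g = z * (φ z)⁻¹) : ¬ PropertyRInfinity G := fun h =>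
  have := h φ
  have := ReidemeisterClasses.subsingleton_of_forall_eq_mul_inv (φ := φ.toMonoidHom) hφ
  not_finite (ReidemeisterClasses φ.toMonoidHom)

theorem MulEquiv.exists_forall_eq_mul_inv (e : G ≃* H) (ψ : H ≃* H)
    (hψ : ∀ h, ∃ z, h = z * (ψ z)⁻¹) : ∃ φ : G ≃* G, ∀ g, ∃ z, g = z * (φ z)⁻¹ := by
  refine ⟨(e.trans ψ).trans e.symm, fun g => ?_⟩
  obtain ⟨z, hz⟩ := hψ (e g)
  exact ⟨e.symm z, by
    rw [MulEquiv.trans_apply, MulEquiv.trans_apply, MulEquiv.apply_symm_apply, ← _root_.map_inv,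
      ← _root_.map_mul, ← hz, MulEquiv.symm_apply_apply]⟩

end Reidemeister

namespace ReidemeisterTower

variable (X : Type u)

abbrev Stage : ℕ → Type u
  | 0 => X
  | n + 1 => Stage n ⊕ FreeGroup (Stage n)

abbrev Gen : Type u := X ⊕ Σ n, FreeGroup (Stage X n)

def incl : (n : ℕ) → Stage X n → Gen X
  | 0 => Sum.inl
  | n + 1 => Sum.elim (incl n) fun g => Sum.inr ⟨n, g⟩

def twistGen : Gen X → FreeGroup (Gen X)
  | .inl x => of (.inl x)
  | .inr ⟨n, g⟩ => (map (incl X n) g)⁻¹ * of (.inr ⟨n, g⟩)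

def untwistStage : (n : ℕ) → FreeGroup (Stage X n) →* FreeGroup (Gen X)
  | 0 => map Sum.inl
  | n + 1 => lift (Sum.elim (fun x => untwistStage n (of x))
      fun g => untwistStage n g * of (.inr ⟨n, g⟩))

def untwistGen : Gen X → FreeGroup (Gen X)
  | .inl x => of (.inl x)
  | .inr ⟨n, g⟩ => untwistStage X n g * of (.inr ⟨n, g⟩)

theorem lift_untwistGen_comp_map_incl (n : ℕ) :
    (lift (untwistGen X)).comp (map (incl X n)) = untwistStage X n := by
  induction n with
  | zero => exact ext_hom _ _ fun x => by simp [incl, untwistStage, untwistGen]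
  | succ n ih =>
    simp only [MonoidHom.ext_iff, MonoidHom.comp_apply] at ih
    refine ext_hom _ _ ?_
    rintro (x | g)
    · simpa [incl, untwistStage] using ih (of x)
    · simp [incl, untwistStage, untwistGen]

theorem lift_twistGen_comp_untwistStage (n : ℕ) :
    (lift (twistGen X)).comp (untwistStage X n) = map (incl X n) := by
  induction n with
  | zero => exact ext_hom _ _ fun x => by simp [incl, untwistStage, twistGen]
  | succ n ih =>
    simp only [MonoidHom.ext_iff, MonoidHom.comp_apply] at ih
    refine ext_hom _ _ ?_
    rintro (x | g)
    · simpa [incl, untwistStage] using ih (of x)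
    · simp [incl, untwistStage, twistGen, ih g]

def twist : FreeGroup (Gen X) ≃* FreeGroup (Gen X) :=
  MonoidHom.toMulEquiv (lift (twistGen X)) (lift (untwistGen X))
    (ext_hom _ _ <| by
      rintro (x | ⟨n, g⟩)
      · simp [twistGen, untwistGen]
      · simp [twistGen, untwistGen, ← DFunLike.congr_fun (lift_untwistGen_comp_map_incl X n) g])
    (ext_hom _ _ <| by
      rintro (x | ⟨n, g⟩)
      · simp [twistGen, untwistGen]
      · simp [twistGen, untwistGen, ← DFunLike.congr_fun (lift_twistGen_comp_untwistStage X n) g])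

theorem monotone_range_map_incl : Monotone fun n => (map (incl X n)).range := by
  refine monotone_nat_of_le_succ fun n => ?_
  have : map (incl X n) = (map (incl X (n + 1))).comp (map Sum.inl) :=
    ext_hom _ _ fun x => by simp [incl]
  rw [this, MonoidHom.range_comp]
  exact Subgroup.map_le_range _ _

theorem exists_map_incl_eq (w : FreeGroup (Gen X)) : ∃ n g, map (incl X n) g = w := by
  have h_top : ⨆ n, (map (incl X n)).range = ⊤ := by
    rw [eq_top_iff, ← closure_range_of, Subgroup.closure_le]
    rintro _ ⟨x | ⟨n, g⟩, rfl⟩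
    · exact Subgroup.mem_iSup_of_mem 0 ⟨of x, by simp [incl]⟩
    · exact Subgroup.mem_iSup_of_mem (n + 1) ⟨of (.inr g), by simp [incl]⟩
  have hw : w ∈ ⨆ n, (map (incl X n)).range := h_top ▸ Subgroup.mem_top w
  simpa using (Subgroup.mem_iSup_of_directed (monotone_range_map_incl X).directed_le).1 hw

theorem exists_eq_mul_twist_inv (w : FreeGroup (Gen X)) : ∃ z, w = z * (twist X z)⁻¹ := by
  obtain ⟨n, g, rfl⟩ := exists_map_incl_eq X w
  exact ⟨of (.inr ⟨n, g⟩), by simp [twist, twistGen]⟩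

instance [Nonempty X] : ∀ n, Nonempty (Stage X n)
  | 0 => ‹_›
  | _ + 1 => ⟨.inr 1⟩

variable [Infinite X]

theorem mk_stage (n : ℕ) : #(Stage X n) = #X := by
  induction n with
  | zero => rfl
  | succ n ih =>
    rw [mk_sum, mk_freeGroup, ih, max_eq_left (aleph0_le_mk X), lift_id,
      add_eq_self (aleph0_le_mk X)]

theorem mk_gen : #(Gen X) = #X := by
  have hX := aleph0_le_mk X
  simp only [Gen, mk_sum, mk_sigma, mk_freeGroup, mk_stage, max_eq_left hX, sum_const, mk_nat,
    lift_id, lift_uzero, lift_aleph0, mul_eq_right hX hX aleph0_ne_zero, add_eq_self hX]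

end ReidemeisterTower

/-- For any infinite set `X`, there exists an automorphism `φ` of the free group
`FreeGroup X` with exactly one Reidemeister class: every `g` equals `z * (φ z)⁻¹` for some
`z`. Hence `FreeGroup X` does not have property `R_∞`. -/
theorem freeGroup_infinite_not_propertyRInfinity (X : Type*) [Infinite X] :
    (∃ φ : FreeGroup X ≃* FreeGroup X,
      ∀ g : FreeGroup X, ∃ z : FreeGroup X, g = z * (φ z)⁻¹) ∧
    ¬ PropertyRInfinity (FreeGroup X) := by
  obtain ⟨e⟩ : Nonempty (X ≃ ReidemeisterTower.Gen X) :=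
    Cardinal.eq.mp (ReidemeisterTower.mk_gen X).symm
  obtain ⟨φ, hφ⟩ := (freeGroupCongr e).exists_forall_eq_mul_inv (ReidemeisterTower.twist X)
    (ReidemeisterTower.exists_eq_mul_twist_inv X)
  exact ⟨⟨φ, hφ⟩, not_propertyRInfinity_of_forall_eq_mul_inv_s8 φ hφ⟩
end

section
/- Let X be an infinite set equipped with a well-order (a linear order whose strict order is well-founded) such that every proper initial segment {y ∈ X : y < x} has cardinality strictly smaller than the cardinality of X (i.e., the order type of X is the initial ordinal of |X|). Then there exists a surjection h : X → FreeGroup X such that for every x ∈ X, either h(x) = 1 or there exists b ∈ X with b < x and h(x) lying in the subgroup of FreeGroup X generated by the generators {FreeGroup.of y : y < b}. -/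
/-!
An element of `FreeGroup X` involves finitely many generators, and `X` has no maximum, so it lies
in `F(Iio b)` for some `b`. Since `#(FreeGroup X) = #X` and the initial segments are small, every
final segment `Ioi b` is large; transfinite recursion along `X` therefore yields an injection `ι`
from `FreeGroup X` into `X` placing each `g` above such a bound. Put `h (ι g) = g` and `h = 1`
off the range of `ι`.
-/

open Cardinal Set

universe u

section SmallInitialSegments

variable {X : Type u} [LinearOrder X]

theorem mk_Iic_lt_of_mk_Iio_lt [Infinite X] (hcard : ∀ x : X, #{y : X // y < x} < #X) (b : X) :
    #(Iic b) < #X := by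
  have hX : ℵ₀ ≤ #X := infinite_iff.mp ‹_›
  rw [← Iio_insert]
  exact mk_insert_le.trans_lt <| add_lt_of_lt hX (hcard b) (one_lt_aleph0.trans_le hX)

theorem exists_gt_notMem_of_mk_lt [Infinite X] (hcard : ∀ x : X, #{y : X // y < x} < #X)
    (b : X) {s : Set X} (hs : #s < #X) : ∃ y, b < y ∧ y ∉ s := by
  have hsmall : #(Iic b ∪ s : Set X) < #X :=
    (mk_union_le _ _).trans_lt <|
      add_lt_of_lt (infinite_iff.mp ‹_›) (mk_Iic_lt_of_mk_Iio_lt hcard b) hs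
  obtain ⟨y, hy⟩ : ∃ y, y ∉ Iic b ∪ s := by
    by_contra! h
    rw [eq_univ_of_forall h, mk_univ] at hsmall
    exact hsmall.false
  simp only [mem_union, mem_Iic, not_or, not_le] at hy
  exact ⟨y, hy⟩

theorem noMaxOrder_of_mk_Iio_lt [Infinite X] (hcard : ∀ x : X, #{y : X // y < x} < #X) :
    NoMaxOrder X where
  exists_gt b := by
    obtain ⟨y, hy, -⟩ := exists_gt_notMem_of_mk_lt hcard b (s := Iio b) (hcard b)
    exact ⟨y, hy⟩

theorem exists_injective_lt_of_mk_Iio_lt [Infinite X] [WellFoundedLT X]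
    (hcard : ∀ x : X, #{y : X // y < x} < #X) (B : X → X) :
    ∃ ι : X → X, Function.Injective ι ∧ ∀ x, B x < ι x := by
  have step : ∀ x (prev : ∀ z, z < x → X), ∃ y, B x < y ∧ ∀ z (hz : z < x), prev z hz ≠ y := by
    intro x prev
    obtain ⟨y, hBy, hy⟩ := exists_gt_notMem_of_mk_lt hcard (B x)
      (s := range fun z : {z // z < x} ↦ prev z z.2) (mk_range_le.trans_lt (hcard x))
    exact ⟨y, hBy, fun z hz hzy ↦ hy ⟨⟨z, hz⟩, hzy⟩⟩
  choose F hF_gt hF_ne using step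
  set ι : X → X := WellFoundedLT.fix F
  have hι : ∀ x, ι x = F x fun z _ ↦ ι z := WellFoundedLT.fix_eq F
  refine ⟨ι, fun a b hab ↦ ?_, fun x ↦ (hι x).symm ▸ hF_gt _ _⟩
  by_contra hne
  rcases lt_or_gt_of_ne hne with h | h
  · exact hF_ne b (fun z _ ↦ ι z) a h (hab.trans (hι b))
  · exact hF_ne a (fun z _ ↦ ι z) b h (hab.symm.trans (hι a))

theorem exists_injective_lt_of_mk_le [Infinite X] [WellFoundedLT X]
    (hcard : ∀ x : X, #{y : X // y < x} < #X) {α : Type u} (hα : #α ≤ #X) (β : α → X) :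
    ∃ ι : α → X, Function.Injective ι ∧ ∀ a, β a < ι a := by
  obtain ⟨k⟩ := hα
  obtain ⟨ι, hι, hβι⟩ := exists_injective_lt_of_mk_Iio_lt hcard (Function.extend k β id)
  refine ⟨ι ∘ k, hι.comp k.injective, fun a ↦ ?_⟩
  simpa only [Function.comp_apply, k.injective.extend_apply] using hβι (k a)

end SmallInitialSegments

theorem FreeGroup.exists_mem_closure_of_Iio {X : Type*} [LinearOrder X] [Nonempty X]
    [NoMaxOrder X] (g : FreeGroup X) : ∃ b : X, g ∈ Subgroup.closure (of '' Iio b) := by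
  have mono {b c : X} (h : b ≤ c) :
      Subgroup.closure (of '' Iio b) ≤ Subgroup.closure (of '' Iio c) :=
    Subgroup.closure_mono (image_mono (Iio_subset_Iio h))
  induction g using FreeGroup.induction_on with
  | C1 => exact ⟨Classical.arbitrary X, one_mem _⟩
  | of x =>
    obtain ⟨b, hb⟩ := exists_gt x
    exact ⟨b, Subgroup.subset_closure (mem_image_of_mem _ hb)⟩
  | inv_of x ih =>
    obtain ⟨b, hb⟩ := ih
    exact ⟨b, inv_mem hb⟩
  | mul g h ihg ihh =>
    obtain ⟨b, hb⟩ := ihg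
    obtain ⟨c, hc⟩ := ihh
    exact ⟨max b c, mul_mem (mono le_sup_left hb) (mono le_sup_right hc)⟩

/-- Let `X` be an infinite set with a well-order whose proper initial segments all have
cardinality strictly smaller than `|X|`. Then there is a surjection `h : X → FreeGroup X`
such that each `h x` is either trivial or lies in the subgroup generated by the generators
with index below some `b < x`. -/
theorem exists_surjection_freeGroup_of_wellOrder (X : Type*) [Infinite X] [LinearOrder X]
    [WellFoundedLT X] (hcard : ∀ x : X, Cardinal.mk {y : X // y < x} < Cardinal.mk X) :
    ∃ h : X → FreeGroup X, Function.Surjective h ∧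
      ∀ x : X, h x = 1 ∨ ∃ b : X, b < x ∧
        h x ∈ Subgroup.closure (FreeGroup.of '' {y : X | y < b}) := by
  have := noMaxOrder_of_mk_Iio_lt hcard
  choose β hβ using FreeGroup.exists_mem_closure_of_Iio (X := X)
  have hfree : #(FreeGroup X) ≤ #X := by
    rw [mk_freeGroup]
    exact max_le le_rfl (infinite_iff.mp ‹_›)
  obtain ⟨ι, hι, hβι⟩ := exists_injective_lt_of_mk_le hcard hfree β
  refine ⟨Function.extend ι id 1, fun g ↦ ⟨ι g, hι.extend_apply _ _ g⟩, fun x ↦ ?_⟩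
  by_cases hx : ∃ g, ι g = x
  · obtain ⟨g, rfl⟩ := hx
    rw [hι.extend_apply]
    exact Or.inr ⟨β g, hβι g, hβ g⟩
  · exact Or.inl (Function.extend_apply' _ _ _ hx)
end

section
/- For every positive integer r there exists a matrix A_r ∈ GL(r, ℤ) whose characteristic polynomial has r distinct complex roots λ_1, λ_2, ..., λ_r, and such that for every k with 1 ≤ k ≤ 2r − 1 and every choice of indices i_1, i_2, ..., i_k ∈ {1, 2, ..., r} (repetitions allowed), the product λ_{i_1} · λ_{i_2} · ... · λ_{i_k} ≠ 1. -/
/-!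
Let `b₀ = 0` and `bᵢ = 2 ^ (4r) ^ i` for `0 < i < r`, and `P = ∏ᵢ (X - bᵢ) - (-1) ^ r`. This is
a monic integer polynomial with constant term `-(-1) ^ r`, so the companion matrix of `P` (the
multiplication by `X` on `ℤ[X] ⧸ (P)`) lies in `GL(r, ℤ)`. Since the `bᵢ` are integers far apart,
the perturbation by `±1` leaves a real root `λ₀ ∈ (-2, 2)` and a real root `λᵢ ∈ (bᵢ / 2, 2 bᵢ)`
for each `i > 0`; these are the `r` distinct eigenvalues, and their product is `-1`, so `λ₀ < 0`.

If `∏ λᵢ ^ mᵢ = 1` with `∑ mᵢ = k`, comparing signs shows that `m₀` is even and that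
`∏_{i>0} λᵢ ^ mᵢ = ∏_{i>0} λᵢ ^ m₀`. The `λᵢ` grow so fast that `λ_J > (λ₁ ⋯ λ_{J-1}) ^ (2r)`, so
exponent vectors bounded by `2r` give distinct products, and all `mᵢ` equal `m₀`. Then
`k = r m₀` with `m₀` even and positive, so `k ≥ 2r`.
-/

open Polynomial Finset

theorem exists_mem_Ioo_eq_zero_of_mul_neg {f : ℝ → ℝ} (hf : Continuous f) {a b : ℝ}
    (hab : a ≤ b) (h : f a * f b < 0) : ∃ x ∈ Set.Ioo a b, f x = 0 := by
  rcases mul_neg_iff.1 h with ⟨ha, hb⟩ | ⟨ha, hb⟩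
  · exact intermediate_value_Ioo' hab hf.continuousOn ⟨hb, ha⟩
  · exact intermediate_value_Ioo hab hf.continuousOn ⟨ha, hb⟩

theorem add_mul_add_neg_of_mul_neg {u v c : ℝ} (huv : u * v < 0) (hu : |c| < |u|)
    (hv : |c| < |v|) : (u + c) * (v + c) < 0 := by
  rcases mul_neg_iff.1 huv with ⟨hu0, hv0⟩ | ⟨hu0, hv0⟩
  · rw [abs_of_pos hu0] at hu
    rw [abs_of_neg hv0] at hv
    exact mul_neg_of_pos_of_neg (by linarith [neg_abs_le c]) (by linarith [le_abs_self c])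
  · rw [abs_of_neg hu0] at hu
    rw [abs_of_pos hv0] at hv
    exact mul_neg_of_neg_of_pos (by linarith [le_abs_self c]) (by linarith [neg_abs_le c])

theorem exists_mem_Ioo_prod_sub_add_eq_zero {ι : Type*} {s : Finset ι} {b : ι → ℝ}
    {c lo hi : ℝ} {j : ι} (hj : j ∈ s) (hlo : |c| < b j - lo) (hhi : |c| < hi - b j)
    (hsep : ∀ i ∈ s, i ≠ j → b i + 1 ≤ lo ∨ hi + 1 ≤ b i) :
    ∃ x ∈ Set.Ioo lo hi, ∏ i ∈ s, (x - b i) + c = 0 := by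
  classical
  have hc := abs_nonneg c
  set g : ℝ → ℝ := fun t => ∏ i ∈ s.erase j, (t - b i)
  have hsplit (t : ℝ) : ∏ i ∈ s, (t - b i) = (t - b j) * g t := (mul_prod_erase s _ hj).symm
  have hg (t : ℝ) (ht₁ : lo ≤ t) (ht₂ : t ≤ hi) : 1 ≤ |g t| := by
    simp only [g, abs_prod]
    refine one_le_prod fun i hi => le_abs.2 ?_
    rcases hsep i (mem_of_mem_erase hi) (ne_of_mem_erase hi) with h | h
    exacts [Or.inl (by linarith), Or.inr (by linarith)]
  have hglohi : 0 < g lo * g hi := by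
    simp only [g, ← prod_mul_distrib]
    refine prod_pos fun i hi => ?_
    rcases hsep i (mem_of_mem_erase hi) (ne_of_mem_erase hi) with h | h
    · exact mul_pos (by linarith) (by linarith)
    · exact mul_pos_of_neg_of_neg (by linarith) (by linarith)
  have hmul : (∏ i ∈ s, (lo - b i)) * ∏ i ∈ s, (hi - b i) < 0 := by
    rw [hsplit, hsplit, mul_mul_mul_comm]
    exact mul_neg_of_neg_of_pos (mul_neg_of_neg_of_pos (by linarith) (by linarith)) hglohi
  have habs (t : ℝ) (ht₁ : lo ≤ t) (ht₂ : t ≤ hi) : |t - b j| ≤ |∏ i ∈ s, (t - b i)| := by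
    rw [hsplit, abs_mul]
    exact le_mul_of_one_le_right (abs_nonneg _) (hg t ht₁ ht₂)
  have hlo' := habs lo le_rfl (by linarith)
  have hhi' := habs hi (by linarith) le_rfl
  rw [abs_of_neg (by linarith)] at hlo'
  rw [abs_of_pos (by linarith)] at hhi'
  exact exists_mem_Ioo_eq_zero_of_mul_neg (by fun_prop) (by linarith)
    (add_mul_add_neg_of_mul_neg hmul (by linarith) (by linarith))

theorem Polynomial.eq_prod_X_sub_C_of_injective {R ι : Type*} [CommRing R] [IsDomain R]
    [Fintype ι] {p : R[X]} (hp : p.Monic) (hdeg : p.natDegree = Fintype.card ι) {ρ : ι → R}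
    (hρ : Function.Injective ρ) (hroot : ∀ i, p.IsRoot (ρ i)) : p = ∏ i, (X - C (ρ i)) := by
  classical
  have hle : univ.val.map ρ ≤ p.roots :=
    (Multiset.le_iff_subset (univ.nodup.map hρ)).2 fun x hx => by
      obtain ⟨i, -, rfl⟩ := Multiset.mem_map.1 hx
      exact (mem_roots hp.ne_zero).2 (hroot i)
  have hdvd := (Multiset.prod_X_sub_C_dvd_iff_le_roots hp.ne_zero _).2 hle
  rw [Multiset.map_map] at hdvd
  refine eq_of_monic_of_dvd_of_natDegree_le (monic_prod_of_monic _ _ fun i _ => monic_X_sub_C _)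
    hp hdvd ?_
  rw [natDegree_prod_of_monic _ _ fun i _ => monic_X_sub_C _, hdeg]
  simp

theorem Polynomial.Monic.minpoly_root {R : Type*} [CommRing R] {p : R[X]} (hp : p.Monic) :
    minpoly R (AdjoinRoot.root p) = p := by
  refine (minpoly.unique' R _ hp (by simp) fun q hq => ?_).symm
  refine or_iff_not_imp_right.2 fun hdvd => ?_
  rw [ne_eq, Classical.not_not, AdjoinRoot.aeval_eq, AdjoinRoot.mk_eq_zero] at hdvd
  nontriviality R
  rw [← (modByMonic_eq_self_iff hp).2 hq, (modByMonic_eq_zero_iff_dvd hp).2 hdvd]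

theorem Polynomial.Monic.exists_matrix_charpoly_eq {R : Type*} [CommRing R] {p : R[X]}
    (hp : p.Monic) {n : ℕ} (hn : p.natDegree = n) :
    ∃ M : Matrix (Fin n) (Fin n) R, M.charpoly = p := by
  let pb := AdjoinRoot.powerBasis' hp
  have hdim : pb.dim = n := hn
  refine ⟨Matrix.reindex (finCongr hdim) (finCongr hdim)
    (Algebra.leftMulMatrix pb.basis pb.gen), ?_⟩
  rw [Matrix.charpoly_reindex, charpoly_leftMulMatrix, AdjoinRoot.powerBasis'_gen,
    hp.minpoly_root]

theorem Polynomial.Monic.exists_generalLinearGroup_charpoly_eq {R : Type*} [CommRing R]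
    {p : R[X]} (hp : p.Monic) (h0 : IsUnit (p.coeff 0)) {n : ℕ} (hn : p.natDegree = n) :
    ∃ A : Matrix.GeneralLinearGroup (Fin n) R, (A : Matrix (Fin n) (Fin n) R).charpoly = p := by
  obtain ⟨M, hM⟩ := hp.exists_matrix_charpoly_eq hn
  have hdet : IsUnit M.det := by
    rw [Matrix.det_eq_sign_charpoly_coeff, hM]
    exact ((isUnit_neg_one).pow _).mul h0
  exact ⟨((Matrix.isUnit_iff_isUnit_det M).2 hdet).unit, hM⟩

section OrderedRing

variable {K : Type*} [CommRing K] [LinearOrder K] [IsStrictOrderedRing K] {x : ℕ → K} {N : ℕ}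

theorem prod_range_succ_pow_lt_of_lt (hx : ∀ i, 1 ≤ x i)
    (hsup : ∀ j, (∏ i ∈ range j, x i) ^ N < x j) {e e' : ℕ → ℕ} (he : ∀ i, e i ≤ N) {n : ℕ}
    (hn : e n < e' n) : ∏ i ∈ range (n + 1), x i ^ e i < ∏ i ∈ range (n + 1), x i ^ e' i := by
  have hxn : 0 < x n := zero_lt_one.trans_le (hx n)
  rw [prod_range_succ, prod_range_succ]
  calc (∏ i ∈ range n, x i ^ e i) * x n ^ e n
      ≤ (∏ i ∈ range n, x i) ^ N * x n ^ e n := by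
        rw [← prod_pow]
        gcongr with i
        · exact fun i _ => pow_nonneg (zero_le_one.trans (hx i)) _
        · exact hx i
        · exact he i
    _ < x n * x n ^ e n := by gcongr; exact hsup n
    _ = x n ^ (e n + 1) := (pow_succ' _ _).symm
    _ ≤ x n ^ e' n := pow_le_pow_right₀ (hx n) hn
    _ ≤ (∏ i ∈ range n, x i ^ e' i) * x n ^ e' n :=
        le_mul_of_one_le_left (pow_nonneg hxn.le _) (one_le_prod fun i _ => one_le_pow₀ (hx i))

theorem eq_of_prod_range_pow_eq (hx : ∀ i, 1 ≤ x i)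
    (hsup : ∀ j, (∏ i ∈ range j, x i) ^ N < x j) {e e' : ℕ → ℕ} (he : ∀ i, e i ≤ N)
    (he' : ∀ i, e' i ≤ N) {n : ℕ}
    (h : ∏ i ∈ range n, x i ^ e i = ∏ i ∈ range n, x i ^ e' i) : ∀ i < n, e i = e' i := by
  induction n with
  | zero => simp
  | succ n ih =>
    have hn : e n = e' n := by
      rcases lt_trichotomy (e n) (e' n) with hlt | heq | hgt
      · exact absurd h (prod_range_succ_pow_lt_of_lt hx hsup he hlt).ne
      · exact heq
      · exact absurd h (prod_range_succ_pow_lt_of_lt hx hsup he' hgt).ne'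
    rw [prod_range_succ, prod_range_succ, hn] at h
    have hpos : x n ^ e' n ≠ 0 := (pow_pos (zero_lt_one.trans_le (hx n)) _).ne'
    intro i hi
    rcases Nat.lt_succ_iff_lt_or_eq.1 hi with hi | rfl
    · exact ih (mul_right_cancel₀ hpos h) i hi
    · exact hn

theorem even_and_eq_pow_of_mul_eq_neg_one {u y z : K} {a : ℕ} (hy : 0 < y) (hz : 0 < z)
    (huy : u * y = -1) (h : u ^ a * z = 1) : Even a ∧ z = y ^ a := by
  have hu : u < 0 := by nlinarith
  have ha : Even a := by
    by_contra hodd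
    have := mul_neg_of_neg_of_pos ((Nat.not_even_iff_odd.1 hodd).pow_neg hu) hz
    linarith
  refine ⟨ha, mul_left_cancel₀ (pow_ne_zero a hu.ne) ?_⟩
  rw [h, ← mul_pow, huy, ha.neg_one_pow]

theorem pow_mul_prod_pow_ne_one {u : K} {n : ℕ} (hx : ∀ i, 1 ≤ x i)
    (hsup : ∀ j, (∏ i ∈ range j, x i) ^ N < x j) (hux : u * ∏ i ∈ range n, x i = -1)
    {m : ℕ → ℕ} (hm : ∀ j, m j ≤ N) (hpos : 0 < ∑ j ∈ range (n + 1), m j)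
    (hlt : ∑ j ∈ range (n + 1), m j < 2 * (n + 1)) :
    u ^ m 0 * ∏ i ∈ range n, x i ^ m (i + 1) ≠ 1 := by
  intro h
  have hxpos (i : ℕ) : 0 < x i := zero_lt_one.trans_le (hx i)
  obtain ⟨heven, heq⟩ := even_and_eq_pow_of_mul_eq_neg_one (prod_pos fun i _ => hxpos i)
    (prod_pos fun i _ => pow_pos (hxpos i) _) hux h
  rw [← prod_pow] at heq
  have hconst := eq_of_prod_range_pow_eq hx hsup (fun i => hm (i + 1)) (fun _ => hm 0) heq
  have hsum : ∑ j ∈ range (n + 1), m j = (n + 1) * m 0 := by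
    rw [sum_range_succ', sum_congr rfl fun i hi => hconst i (mem_range.1 hi)]
    simp only [sum_const, card_range, smul_eq_mul]
    ring
  rw [hsum] at hpos hlt
  have h1 : m 0 = 1 := by
    have := Nat.lt_of_mul_lt_mul_left (hlt.trans_eq (mul_comm _ _))
    have := Nat.pos_of_mul_pos_left hpos
    omega
  exact Nat.not_even_one (h1 ▸ heven)

end OrderedRing

def rootCenter (r : ℕ) : ℕ → ℤ
  | 0 => 0
  | i + 1 => 2 ^ (4 * r) ^ (i + 1)

noncomputable def eigenPoly (r : ℕ) : ℤ[X] :=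
  ∏ j ∈ range r, (X - C (rootCenter r j)) - C ((-1) ^ r)

abbrev rootWindow (r i : ℕ) : Set ℝ :=
  Set.Ioo ((rootCenter r (i + 1) : ℝ) / 2) (2 * rootCenter r (i + 1))

section EigenPoly

variable {r : ℕ}

theorem two_mul_sum_add_one_le (hr : 0 < r) (J : ℕ) :
    2 * r * ∑ i ∈ range J, ((4 * r) ^ (i + 1) + 1) + 1 ≤ (4 * r) ^ (J + 1) := by
  induction J with
  | zero => simp only [sum_range_zero, mul_zero, zero_add, pow_one]; omega
  | succ J ih =>
    have hE : 4 * r ≤ (4 * r) ^ (J + 1) := Nat.le_self_pow J.succ_ne_zero _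
    rw [sum_range_succ, pow_succ _ (J + 1)]
    nlinarith

theorem four_le_rootCenter_succ (hr : 0 < r) (i : ℕ) : (4 : ℝ) ≤ rootCenter r (i + 1) := by
  have hE : 2 ≤ (4 * r) ^ (i + 1) := (by omega : 2 ≤ 4 * r).trans (Nat.le_self_pow i.succ_ne_zero _)
  calc (4 : ℝ) = 2 ^ 2 := by norm_num
    _ ≤ 2 ^ (4 * r) ^ (i + 1) := pow_le_pow_right₀ (by norm_num) hE
    _ = rootCenter r (i + 1) := by simp [rootCenter]

theorem four_mul_rootCenter_succ_le (hr : 0 < r) {i j : ℕ} (hij : i < j) :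
    4 * (rootCenter r (i + 1) : ℝ) ≤ rootCenter r (j + 1) := by
  have hE : (4 * r) ^ (i + 1) + 2 ≤ (4 * r) ^ (j + 1) := by
    have h1 : (4 * r) ^ (i + 2) ≤ (4 * r) ^ (j + 1) := Nat.pow_le_pow_right (by omega) (by omega)
    have h2 : 1 ≤ (4 * r) ^ (i + 1) := Nat.one_le_pow _ _ (by omega)
    rw [pow_succ _ (i + 1)] at h1
    nlinarith
  calc 4 * (rootCenter r (i + 1) : ℝ) = 2 ^ ((4 * r) ^ (i + 1) + 2) := by
        push_cast [rootCenter, pow_add]; ring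
    _ ≤ 2 ^ (4 * r) ^ (j + 1) := pow_le_pow_right₀ (by norm_num) hE
    _ = rootCenter r (j + 1) := by simp [rootCenter]

theorem two_mul_prod_pow_le_rootCenter (hr : 0 < r) (J : ℕ) :
    2 * (∏ i ∈ range J, 2 * (rootCenter r (i + 1) : ℝ)) ^ (2 * r) ≤ rootCenter r (J + 1) := by
  calc 2 * (∏ i ∈ range J, 2 * (rootCenter r (i + 1) : ℝ)) ^ (2 * r)
      = 2 ^ (2 * r * ∑ i ∈ range J, ((4 * r) ^ (i + 1) + 1) + 1) := by
        simp only [rootCenter, Int.cast_pow, Int.cast_ofNat, ← pow_succ', prod_pow_eq_pow_sum,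
          ← pow_mul]
        ring_nf
    _ ≤ 2 ^ (4 * r) ^ (J + 1) := pow_le_pow_right₀ (by norm_num) (two_mul_sum_add_one_le hr J)
    _ = rootCenter r (J + 1) := by simp [rootCenter]

theorem eigenPoly_monic (hr : 0 < r) : (eigenPoly r).Monic := by
  have hprod : (∏ j ∈ range r, (X - C (rootCenter r j))).Monic :=
    monic_prod_of_monic _ _ fun j _ => monic_X_sub_C _
  refine hprod.sub_of_left (degree_C_le.trans_lt ?_)
  rw [degree_prod_of_monic _ _ fun j _ => monic_X_sub_C _]
  simp only [degree_X_sub_C, sum_const, card_range, nsmul_one]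
  exact_mod_cast hr

theorem natDegree_eigenPoly : (eigenPoly r).natDegree = r := by
  rw [eigenPoly, natDegree_sub_C, natDegree_prod_of_monic _ _ fun j _ => monic_X_sub_C _]
  simp only [natDegree_X_sub_C, sum_const, card_range, smul_eq_mul, mul_one]

theorem eval_map_eigenPoly {S : Type*} [CommRing S] (x : S) :
    ((eigenPoly r).map (Int.castRingHom S)).eval x =
      ∏ j ∈ range r, (x - rootCenter r j) - (-1) ^ r := by
  simp [eigenPoly, Polynomial.map_prod, eval_prod]

theorem coeff_zero_eigenPoly (hr : 0 < r) : (eigenPoly r).coeff 0 = -(-1) ^ r := by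
  rw [coeff_zero_eq_eval_zero, eigenPoly, eval_sub, eval_prod, prod_eq_zero (mem_range.2 hr)]
  · simp
  · simp [rootCenter]

theorem exists_root_mem_Ioo_neg_two_two (hr : 0 < r) :
    ∃ x ∈ Set.Ioo (-2 : ℝ) 2, ∏ j ∈ range r, (x - rootCenter r j) - (-1) ^ r = 0 := by
  simp only [sub_eq_add_neg (∏ j ∈ range r, _)]
  refine exists_mem_Ioo_prod_sub_add_eq_zero (mem_range.2 hr) ?_ ?_ ?_
  · simp [rootCenter]
  · simp [rootCenter]
  · rintro (_ | i) - hi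
    · exact absurd rfl hi
    · right
      linarith [four_le_rootCenter_succ hr i]

theorem exists_root_mem_rootWindow (hr : 0 < r) {i : ℕ} (hi : i + 1 < r) :
    ∃ x ∈ rootWindow r i, ∏ j ∈ range r, (x - rootCenter r j) - (-1) ^ r = 0 := by
  have h4 := four_le_rootCenter_succ hr
  simp only [sub_eq_add_neg (∏ j ∈ range r, _)]
  refine exists_mem_Ioo_prod_sub_add_eq_zero (mem_range.2 hi) ?_ ?_ ?_
  · simp only [abs_neg, abs_pow, abs_one, one_pow]; linarith [h4 i]
  · simp only [abs_neg, abs_pow, abs_one, one_pow]; linarith [h4 i]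
  · rintro (_ | l) - hl
    · left
      rw [show rootCenter r 0 = 0 from rfl, Int.cast_zero]
      linarith [h4 i]
    · rcases lt_or_gt_of_ne (fun h => hl (congrArg (· + 1) h)) with h | h
      · left; linarith [four_mul_rootCenter_succ_le hr h, h4 l]
      · right; linarith [four_mul_rootCenter_succ_le hr h, h4 i]

theorem exists_strictMono_roots (hr : 0 < r) :
    ∃ ρ : ℕ → ℝ, StrictMono ρ ∧
      (∀ j < r, ∏ i ∈ range r, (ρ j - rootCenter r i) - (-1) ^ r = 0) ∧
      ∀ i, ρ (i + 1) ∈ rootWindow r i := by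
  have h4 := four_le_rootCenter_succ hr
  obtain ⟨ρ₀, hρ₀, hroot₀⟩ := exists_root_mem_Ioo_neg_two_two hr
  -- beyond `r` the centres themselves continue the family, so that it is monotone on all of `ℕ`
  have hbig (i : ℕ) : ∃ x ∈ rootWindow r i,
      i + 1 < r → ∏ j ∈ range r, (x - rootCenter r j) - (-1) ^ r = 0 := by
    by_cases hi : i + 1 < r
    · obtain ⟨x, hx, hroot⟩ := exists_root_mem_rootWindow hr hi
      exact ⟨x, hx, fun _ => hroot⟩
    · exact ⟨rootCenter r (i + 1), ⟨by linarith [h4 i], by linarith [h4 i]⟩, fun h => absurd h hi⟩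
  choose x hx hroot using hbig
  refine ⟨fun | 0 => ρ₀ | i + 1 => x i, strictMono_nat_of_lt_succ ?_, ?_, hx⟩
  · rintro (_ | i)
    · linarith [hρ₀.2, (hx 0).1, h4 0]
    · linarith [(hx i).2, (hx (i + 1)).1, four_mul_rootCenter_succ_le hr i.lt_succ_self]
  · rintro (_ | i) hi
    exacts [hroot₀, hroot i hi]

theorem prod_pow_lt_of_mem_rootWindow (hr : 0 < r) {x : ℕ → ℝ} (hx : ∀ i, x i ∈ rootWindow r i)
    (J : ℕ) : (∏ i ∈ range J, x i) ^ (2 * r) < x J := by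
  have h4 := four_le_rootCenter_succ hr
  calc (∏ i ∈ range J, x i) ^ (2 * r)
      ≤ (∏ i ∈ range J, 2 * (rootCenter r (i + 1) : ℝ)) ^ (2 * r) := by
        gcongr with i
        · exact prod_nonneg fun i _ => by linarith [(hx i).1, h4 i]
        · exact fun i _ => by linarith [(hx i).1, h4 i]
        · exact (hx i).2.le
    _ ≤ rootCenter r (J + 1) / 2 := by linarith [two_mul_prod_pow_le_rootCenter hr J]
    _ < x J := (hx J).1

theorem prod_eq_neg_one_of_map_eigenPoly_eq {S : Type*} [CommRing S] (hr : 0 < r)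
    {ρ : Fin r → S} (h : (eigenPoly r).map (Int.castRingHom S) = ∏ j, (X - C (ρ j))) :
    ∏ j, ρ j = -1 := by
  have h0 := congrArg (eval 0) h
  rw [eval_map_eigenPoly, prod_eq_zero (mem_range.2 hr) (by simp [rootCenter]), eval_prod] at h0
  simp only [eval_sub, eval_X, eval_C, zero_sub, prod_neg, card_univ, Fintype.card_fin] at h0
  have hsq : ((-1 : S) ^ r) ^ 2 = 1 := by rw [← pow_mul, mul_comm, pow_mul]; simp
  linear_combination (-(-1) ^ r) * h0 - (∏ j, ρ j + 1) * hsq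

theorem exists_map_eigenPoly_eq_prod (hr : 0 < r) :
    ∃ ρ : ℕ → ℝ, StrictMono ρ ∧
      (eigenPoly r).map (Int.castRingHom ℂ) = ∏ j : Fin r, (X - C (ρ j : ℂ)) ∧
      ∀ i, ρ (i + 1) ∈ rootWindow r i := by
  obtain ⟨ρ, hmono, hroot, hbig⟩ := exists_strictMono_roots hr
  refine ⟨ρ, hmono, ?_, hbig⟩
  refine eq_prod_X_sub_C_of_injective ((eigenPoly_monic hr).map _) ?_
    (Complex.ofReal_injective.comp (hmono.injective.comp Fin.val_injective)) fun j => ?_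
  · rw [(eigenPoly_monic hr).natDegree_map, natDegree_eigenPoly, Fintype.card_fin]
  · rw [IsRoot, eval_map_eigenPoly]
    exact_mod_cast hroot j j.isLt

theorem prod_ne_one_of_mem_rootWindow (hr : 0 < r) {ρ : ℕ → ℝ} (hρ : ∏ j : Fin r, ρ j = -1)
    (hbig : ∀ i, ρ (i + 1) ∈ rootWindow r i)
    {k : ℕ} (hk1 : 1 ≤ k) (hk2 : k ≤ 2 * r - 1) (idx : Fin k → Fin r) :
    ∏ t, ρ (idx t) ≠ 1 := by
  obtain ⟨n, rfl⟩ : ∃ n, r = n + 1 := ⟨r - 1, by omega⟩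
  set m : ℕ → ℕ := fun j => #{t | (idx t : ℕ) = j}
  have hmaps : ∀ t ∈ (univ : Finset (Fin k)), (idx t : ℕ) ∈ range (n + 1) :=
    fun t _ => mem_range.2 (idx t).isLt
  have hsum : ∑ j ∈ range (n + 1), m j = k := by
    rw [← card_eq_sum_card_fiberwise hmaps, card_univ, Fintype.card_fin]
  have hm (j : ℕ) : m j ≤ 2 * (n + 1) :=
    (card_filter_le _ _).trans (by rw [card_univ, Fintype.card_fin]; omega)
  have hx (i : ℕ) : 1 ≤ ρ (i + 1) := by linarith [(hbig i).1, four_le_rootCenter_succ hr i]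
  rw [← prod_fiberwise_of_maps_to' hmaps]
  simp only [prod_const]
  rw [Fin.prod_univ_eq_prod_range, prod_range_succ', mul_comm] at hρ
  rw [prod_range_succ', mul_comm]
  exact pow_mul_prod_pow_ne_one (x := fun i => ρ (i + 1)) hx
    (prod_pow_lt_of_mem_rootWindow hr hbig) hρ hm (by omega) (by omega)

end EigenPoly

/-- For every positive integer `r` there is a matrix `A_r ∈ GL(r, ℤ)` whose characteristic
polynomial has `r` distinct complex roots `λ_1, …, λ_r`, such that no product of between
`1` and `2r - 1` of the `λ_i` (repetitions allowed) equals `1`. -/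
theorem exists_integerMatrix_eigenvalue_products_ne_one (r : ℕ) (hr : 0 < r) :
    ∃ A : Matrix.GeneralLinearGroup (Fin r) ℤ, ∃ lam : Fin r → ℂ,
      Function.Injective lam ∧
      ((A : Matrix (Fin r) (Fin r) ℤ).map (Int.cast : ℤ → ℂ)).charpoly =
        ∏ j : Fin r, (X - C (lam j)) ∧
      ∀ k : ℕ, 1 ≤ k → k ≤ 2 * r - 1 →
        ∀ idx : Fin k → Fin r, (∏ t : Fin k, lam (idx t)) ≠ 1 := by
  obtain ⟨ρ, hmono, hfac, hbig⟩ := exists_map_eigenPoly_eq_prod hr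
  obtain ⟨A, hA⟩ := (eigenPoly_monic hr).exists_generalLinearGroup_charpoly_eq
    (by rw [coeff_zero_eigenPoly hr]; exact (isUnit_neg_one.pow r).neg) natDegree_eigenPoly
  have hρ : ∏ j : Fin r, ρ j = -1 := by
    exact_mod_cast prod_eq_neg_one_of_map_eigenPoly_eq hr hfac
  refine ⟨A, fun j => ρ j, Complex.ofReal_injective.comp (hmono.injective.comp Fin.val_injective),
    ?_, fun k hk1 hk2 idx h => prod_ne_one_of_mem_rootWindow hr hρ hbig hk1 hk2 idx ?_⟩
  · rw [← hfac, ← hA]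
    exact Matrix.charpoly_map (A : Matrix (Fin r) (Fin r) ℤ) (Int.castRingHom ℂ)
  · simp only at h
    exact_mod_cast h
end

section
/- Let n > 1 be an integer and let p(x) = x^n + a_{n−1}x^{n−1} + ... + a_2 x^2 + a_1 x + (−1)^{n+1} be a polynomial with integer coefficients a_1, ..., a_{n−1} satisfying |a_{n−1}| > |a_{n−2}| + ... + |a_2| + |a_1| + 2. Then p has exactly one root θ_1 ∈ ℂ with |θ_1| ≥ 1; this root is real and satisfies |θ_1| > 1, and all other complex roots of p have modulus strictly less than 1. -/
open Polynomial

/-- The polynomial `p(x) = x^n + a_{n-1} x^{n-1} + ⋯ + a_2 x^2 + a_1 x + (-1)^{n+1}`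
with integer coefficients. -/
noncomputable def pisotPoly (n : ℕ) (a : ℕ → ℤ) : Polynomial ℤ :=
  X ^ n + ∑ i ∈ Finset.Ico 1 n, C (a i) * X ^ i + C ((-1 : ℤ) ^ (n + 1))

/-!
Since `p` is monic with constant term of modulus `1`, the product of its roots has modulus `1`,
so some root `θ` has `|θ| ≥ 1`; for such a root the dominant term `a_{n-1} z^{n-1}` forces
`|θ| > |a_{n-1}| - 1 ≥ ∑_{i<n-1} |p_i| + 1`, the last step by integrality of the `a_i`. Writing `p = g · (X - θ)`, the recursion `θ g_{i+1} = g_i - p_{i+1}` gives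
`(|θ| - 1) ∑_{i<n-1} |g_i| ≤ ∑_{i<n-1} |p_i| < |θ| - 1`, so the monic `g` has lower coefficients
of total modulus `< 1` and hence all its roots in the open unit disc. Finally `conj θ` is a root of
`p` of the same modulus as `θ`, so it is `θ`.
-/

open Finset

namespace Polynomial

lemma Monic.eval_eq_pow_add_sum {R : Type*} [CommSemiring R] {f : R[X]} (hf : f.Monic) (z : R) :
    f.eval z = z ^ f.natDegree + ∑ i ∈ range f.natDegree, f.coeff i * z ^ i := by
  conv_lhs => rw [hf.as_sum]
  simp [eval_finsetSum]

section NormedField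

variable {K : Type*} [NormedField K]

lemma norm_sum_mul_pow_mul_norm_le (b : ℕ → K) (d : ℕ) {z : K} (hz : 1 ≤ ‖z‖) :
    ‖∑ i ∈ range d, b i * z ^ i‖ * ‖z‖ ≤ (∑ i ∈ range d, ‖b i‖) * ‖z‖ ^ d := by
  calc ‖∑ i ∈ range d, b i * z ^ i‖ * ‖z‖
      ≤ (∑ i ∈ range d, ‖b i‖ * ‖z‖ ^ i) * ‖z‖ := by
        gcongr
        exact (norm_sum_le _ _).trans_eq (by simp only [norm_mul, norm_pow])
    _ = ∑ i ∈ range d, ‖b i‖ * ‖z‖ ^ (i + 1) := by simp only [sum_mul, pow_succ, mul_assoc]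
    _ ≤ ∑ i ∈ range d, ‖b i‖ * ‖z‖ ^ d :=
        sum_le_sum fun i hi => by gcongr; exact mem_range.1 hi
    _ = (∑ i ∈ range d, ‖b i‖) * ‖z‖ ^ d := (sum_mul ..).symm

lemma Monic.norm_lt_one_of_isRoot {f : K[X]} (hf : f.Monic)
    (hsum : ∑ i ∈ range f.natDegree, ‖f.coeff i‖ < 1) {z : K} (hz : f.IsRoot z) : ‖z‖ < 1 := by
  by_contra! h1
  have hzd : z ^ f.natDegree = -∑ i ∈ range f.natDegree, f.coeff i * z ^ i := by
    rw [eq_neg_iff_add_eq_zero, ← hf.eval_eq_pow_add_sum, hz.eq_zero]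
  have hle := norm_sum_mul_pow_mul_norm_le f.coeff f.natDegree h1
  rw [← norm_neg, ← hzd, norm_pow] at hle
  have hpos : 0 < ‖z‖ ^ f.natDegree := by positivity
  nlinarith

lemma Monic.norm_coeff_sub_one_lt_norm_of_isRoot {f : K[X]} {d : ℕ} (hf : f.Monic)
    (hd : f.natDegree = d + 1) (hc : ∑ i ∈ range d, ‖f.coeff i‖ + 1 < ‖f.coeff d‖)
    {z : K} (hz : f.IsRoot z) (h1 : 1 ≤ ‖z‖) : ‖f.coeff d‖ - 1 < ‖z‖ := by
  have hfac : z ^ d * (z + f.coeff d) = -∑ i ∈ range d, f.coeff i * z ^ i := by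
    have := hf.eval_eq_pow_add_sum z
    rw [hz.eq_zero, hd, sum_range_succ] at this
    linear_combination -this
  have hbound : ‖z‖ * ‖z + f.coeff d‖ ≤ ∑ i ∈ range d, ‖f.coeff i‖ := by
    have hle := norm_sum_mul_pow_mul_norm_le f.coeff d h1
    rw [← norm_neg, ← hfac, norm_mul, norm_pow] at hle
    have hpos : 0 < ‖z‖ ^ d := by positivity
    nlinarith
  have htri : ‖f.coeff d‖ - ‖z‖ ≤ ‖z + f.coeff d‖ := by
    simpa [add_comm] using norm_sub_norm_le (f.coeff d) (-z)
  nlinarith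

lemma sub_one_mul_sum_norm_coeff_le_mul_X_sub_C (g : K[X]) (θ : K) (m : ℕ) :
    (‖θ‖ - 1) * ∑ i ∈ range m, ‖g.coeff i‖ ≤ ∑ i ∈ range m, ‖(g * (X - C θ)).coeff i‖ := by
  set f := g * (X - C θ)
  have h0 : ‖θ‖ * ‖g.coeff 0‖ = ‖f.coeff 0‖ := by simp [f, mul_coeff_zero, mul_comm]
  have hsucc (i : ℕ) : ‖θ‖ * ‖g.coeff (i + 1)‖ ≤ ‖f.coeff (i + 1)‖ + ‖g.coeff i‖ := by
    rw [← norm_mul, show θ * g.coeff (i + 1) = g.coeff i - f.coeff (i + 1) by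
      simp only [f, coeff_mul_X_sub_C]; ring]
    exact (norm_sub_le _ _).trans_eq (add_comm _ _)
  suffices ‖θ‖ * ∑ i ∈ range m, ‖g.coeff i‖
      ≤ ∑ i ∈ range m, ‖f.coeff i‖ + ∑ i ∈ range m, ‖g.coeff i‖ by linarith
  cases m with
  | zero => simp
  | succ m =>
    have hg := sum_range_succ' (fun i => ‖g.coeff i‖) m
    have hf := sum_range_succ' (fun i => ‖f.coeff i‖) m
    have hmono : ∑ i ∈ range m, ‖g.coeff i‖ ≤ ∑ i ∈ range (m + 1), ‖g.coeff i‖ := by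
      simp [sum_range_succ]
    have hstep := sum_le_sum fun i (_ : i ∈ range m) => hsucc i
    rw [sum_add_distrib, ← mul_sum] at hstep
    rw [hg, hf]
    nlinarith

lemma Monic.norm_lt_one_of_isRoot_of_ne {f : K[X]} {d : ℕ} (hf : f.Monic)
    (hd : f.natDegree = d + 1) {θ : K} (hθ : f.IsRoot θ)
    (hbig : ∑ i ∈ range d, ‖f.coeff i‖ + 1 < ‖θ‖) {z : K} (hz : f.IsRoot z) (hne : z ≠ θ) :
    ‖z‖ < 1 := by
  set g := f /ₘ (X - C θ)
  have hfg : g * (X - C θ) = f := by rw [mul_comm]; exact mul_divByMonic_eq_iff_isRoot.2 hθ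
  have hg : g.Monic := (monic_X_sub_C θ).of_mul_monic_right (hfg ▸ hf)
  have hgd : g.natDegree = d := by
    rw [natDegree_divByMonic _ (monic_X_sub_C θ), hd, natDegree_X_sub_C, Nat.add_sub_cancel]
  have hsum : ∑ i ∈ range d, ‖g.coeff i‖ < 1 := by
    have hle := sub_one_mul_sum_norm_coeff_le_mul_X_sub_C g θ d
    rw [hfg] at hle
    have hR : 0 ≤ ∑ i ∈ range d, ‖f.coeff i‖ := sum_nonneg fun _ _ => norm_nonneg _
    by_contra! h
    nlinarith
  refine hg.norm_lt_one_of_isRoot (by rwa [hgd]) ?_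
  have hz0 := hz.eq_zero
  rw [← hfg, eval_mul] at hz0
  exact (mul_eq_zero.1 hz0).resolve_right (by simpa [sub_eq_zero] using hne)

lemma Monic.exists_isRoot_one_le_norm {f : K[X]} (hf : f.Monic) (hs : f.Splits)
    (hd : 0 < f.natDegree) (h0 : 1 ≤ ‖f.coeff 0‖) : ∃ z, f.IsRoot z ∧ 1 ≤ ‖z‖ := by
  by_contra! hsmall
  obtain ⟨z, hz⟩ := Multiset.card_pos_iff_exists_mem.1 (splits_iff_card_roots.1 hs ▸ hd)
  obtain ⟨s, hroots⟩ := Multiset.exists_cons_of_mem hz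
  have hs1 : ‖s.prod‖ ≤ 1 := by
    rw [← normHom_apply, map_multiset_prod]
    simpa using Multiset.prod_map_le_pow_card (f := normHom) (r := 1)
      (fun w _ => norm_nonneg w)
      fun w hw => (hsmall w (isRoot_of_mem_roots (hroots ▸ Multiset.mem_cons_of_mem hw))).le
  have hz1 := hsmall z (isRoot_of_mem_roots hz)
  rw [hs.coeff_zero_eq_prod_roots_of_monic hf, norm_mul, norm_pow, norm_neg, norm_one, one_pow,
    one_mul, hroots, Multiset.prod_cons, norm_mul] at h0
  nlinarith [norm_nonneg z, norm_nonneg s.prod]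

end NormedField

open ComplexConjugate in
theorem Monic.exists_dominant_real_root {f : ℝ[X]} {d : ℕ} (hf : f.Monic)
    (hd : f.natDegree = d + 1) (h0 : 1 ≤ |f.coeff 0|)
    (hc : ∑ i ∈ range d, |f.coeff i| + 2 ≤ |f.coeff d|) :
    ∃ θ : ℂ, aeval θ f = 0 ∧ θ.im = 0 ∧ 1 < ‖θ‖ ∧
      ∀ z : ℂ, aeval z f = 0 → z ≠ θ → ‖z‖ < 1 := by
  set g := f.map (algebraMap ℝ ℂ)
  have hg : g.Monic := hf.map _
  have hgd : g.natDegree = d + 1 := by rw [hf.natDegree_map, hd]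
  have hgc (i : ℕ) : |f.coeff i| = ‖g.coeff i‖ := by simp [g]
  have hroot (z : ℂ) : aeval z f = 0 ↔ g.IsRoot z := by rw [aeval_def, eval₂_eq_eval_map]; rfl
  simp only [hgc] at h0 hc
  simp only [hroot]
  obtain ⟨θ, hθ, hθ1⟩ := hg.exists_isRoot_one_le_norm (IsAlgClosed.splits g) (by omega) h0
  have hR : 0 ≤ ∑ i ∈ range d, ‖g.coeff i‖ := sum_nonneg fun _ _ => norm_nonneg _
  have hbig : ∑ i ∈ range d, ‖g.coeff i‖ + 1 < ‖θ‖ := by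
    linarith [hg.norm_coeff_sub_one_lt_norm_of_isRoot hgd (by linarith) hθ hθ1]
  have hsmall : ∀ z : ℂ, g.IsRoot z → z ≠ θ → ‖z‖ < 1 := fun z =>
    hg.norm_lt_one_of_isRoot_of_ne hgd hθ hbig
  refine ⟨θ, hθ, ?_, by linarith, hsmall⟩
  by_contra him
  have hconj : g.IsRoot (conj θ) := by rw [← hroot, aeval_conj, (hroot θ).2 hθ, map_zero]
  have := hsmall _ hconj (fun h => him (Complex.conj_eq_iff_im.1 h))
  rw [Complex.norm_conj] at this
  linarith

end Polynomial

section pisotPoly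

variable {n : ℕ} {a : ℕ → ℤ}

lemma coeff_pisotPoly (i : ℕ) : (pisotPoly n a).coeff i =
    (if i = n then 1 else 0) + (if i ∈ Ico 1 n then a i else 0) +
      (if i = 0 then (-1) ^ (n + 1) else 0) := by
  rw [pisotPoly, coeff_add, coeff_add, coeff_C, coeff_X_pow, finsetSum_coeff]
  simp [coeff_X_pow, eq_comm]

lemma natDegree_pisotPoly_le : (pisotPoly n a).natDegree ≤ n := by
  refine natDegree_le_iff_coeff_eq_zero.2 fun i hi => ?_
  have : n < i := by exact_mod_cast hi
  simp [coeff_pisotPoly, this.ne', (Nat.zero_le n).trans_lt this |>.ne', this.not_gt]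

lemma coeff_pisotPoly_zero (hn : 0 < n) : (pisotPoly n a).coeff 0 = (-1) ^ (n + 1) := by
  simp [coeff_pisotPoly, hn.ne]

lemma coeff_pisotPoly_of_mem_Ico {i : ℕ} (hi : i ∈ Ico 1 n) : (pisotPoly n a).coeff i = a i := by
  have := mem_Ico.1 hi
  simp [coeff_pisotPoly, hi, this.2.ne, (Nat.one_pos.trans_le this.1).ne']

lemma coeff_pisotPoly_self (hn : 0 < n) : (pisotPoly n a).coeff n = 1 := by
  simp [coeff_pisotPoly, hn.ne']

lemma monic_pisotPoly (hn : 0 < n) : (pisotPoly n a).Monic :=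
  monic_of_natDegree_le_of_coeff_eq_one n natDegree_pisotPoly_le (coeff_pisotPoly_self hn)

lemma natDegree_pisotPoly (hn : 0 < n) : (pisotPoly n a).natDegree = n :=
  natDegree_eq_of_le_of_coeff_ne_zero natDegree_pisotPoly_le (by simp [coeff_pisotPoly_self hn])

end pisotPoly

/-- If `|a_{n-1}| > |a_{n-2}| + ⋯ + |a_1| + 2` then `p` has exactly one complex root `θ₁`
of modulus `≥ 1`; this root is real, has modulus `> 1`, and all other complex roots of `p`
lie strictly inside the unit circle. -/
theorem pisotPoly_roots (n : ℕ) (hn : 1 < n) (a : ℕ → ℤ)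
    (ha : (∑ i ∈ Finset.Ico 1 (n - 1), |a i|) + 2 < |a (n - 1)|) :
    ∃ θ₁ : ℂ, aeval θ₁ (pisotPoly n a) = 0 ∧ θ₁.im = 0 ∧ 1 < ‖θ₁‖ ∧
      ∀ θ : ℂ, aeval θ (pisotPoly n a) = 0 → θ ≠ θ₁ → ‖θ‖ < 1 := by
  obtain ⟨d, rfl⟩ : ∃ d, n = d + 1 := ⟨n - 1, by omega⟩
  rw [Nat.add_sub_cancel] at ha
  set f := (pisotPoly (d + 1) a).map (algebraMap ℤ ℝ)
  have hf : f.Monic := (monic_pisotPoly d.succ_pos).map _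
  have hfd : f.natDegree = d + 1 := by
    rw [(monic_pisotPoly d.succ_pos).natDegree_map, natDegree_pisotPoly d.succ_pos]
  have hcoeff {i : ℕ} (hi : i ∈ Ico 1 (d + 1)) : |f.coeff i| = ((|a i| : ℤ) : ℝ) := by
    simp [f, coeff_pisotPoly_of_mem_Ico hi]
  have h0 : |f.coeff 0| = 1 := by simp [f, coeff_pisotPoly_zero d.succ_pos]
  have hsum : ∑ i ∈ range d, |f.coeff i| = 1 + ∑ i ∈ Ico 1 d, ((|a i| : ℤ) : ℝ) := by
    rw [range_eq_Ico, sum_eq_sum_Ico_succ_bot (by omega), h0]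
    exact congrArg _ (sum_congr rfl fun i hi => hcoeff (Ico_subset_Ico_right d.le_succ hi))
  have hc : ∑ i ∈ range d, |f.coeff i| + 2 ≤ |f.coeff d| := by
    rw [hsum, hcoeff (mem_Ico.2 ⟨by omega, d.lt_succ_self⟩), ← Int.cast_sum]
    exact_mod_cast (by omega : 1 + ∑ i ∈ Ico 1 d, |a i| + 2 ≤ |a d|)
  simpa only [f, aeval_map_algebraMap] using hf.exists_dominant_real_root hfd h0.ge hc
end
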